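/- For every number of alternatives m ≥ 4 and every number of agents n ≥ 4, there is no anonymous and neutral cardinal decision scheme that is u-efficient and u-strategyproof. -/

import Mathlib

open Classical

noncomputable section

variable {A : Type*} [Fintype A]

/-- A (weak) preference relation: complete and transitive. -/
def IsPref (r : A → A → Prop) : Prop :=
  (∀ x y, r x y ∨ r y x) ∧ ∀ x y z, r x y → r y z → r x z

/-- A lottery over the alternatives. -/
def Lottery (A : Type*) [Fintype A] :=
  {p : A → ℝ // (∀ x, 0 ≤ p x) ∧ ∑ x, p x = 1}

/-- Probability that lottery `p` yields an alternative at least as good as `x` w.r.t. `r`. -/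
def upperSum (r : A → A → Prop) (p : Lottery A) (x : A) : ℝ :=
  ∑ y, if r y x then p.1 y else 0

/-- `p` (weakly) stochastically dominates `q` w.r.t. the preference relation `r`. -/
def SDGe (r : A → A → Prop) (p q : Lottery A) : Prop :=
  ∀ x, upperSum r q x ≤ upperSum r p x

/-- Strict stochastic dominance. -/
def SDGt (r : A → A → Prop) (p q : Lottery A) : Prop :=
  SDGe r p q ∧ ¬ SDGe r q p

/-- A profile assigning a preference relation to each of `n` agents; validity. -/
def ValidProfile {n : ℕ} (R : Fin n → A → A → Prop) : Prop :=
  ∀ i, IsPref (R i)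

/-- `p` is SD-efficient at profile `R`. -/
def SDEfficientAt {n : ℕ} (R : Fin n → A → A → Prop) (p : Lottery A) : Prop :=
  ¬ ∃ q : Lottery A, (∀ i, SDGe (R i) q p) ∧ ∃ i, SDGt (R i) q p

def Anonymous {n : ℕ} (f : (Fin n → A → A → Prop) → Lottery A) : Prop :=
  ∀ R : Fin n → A → A → Prop, ValidProfile R →
    ∀ σ : Equiv.Perm (Fin n), f (R ∘ σ) = f R

/-- Relabel a preference relation by a permutation of the alternatives. -/
def relabel (π : Equiv.Perm A) (r : A → A → Prop) : A → A → Prop :=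
  fun x y => r (π.symm x) (π.symm y)

def relabelProfile {n : ℕ} (π : Equiv.Perm A) (R : Fin n → A → A → Prop) :
    Fin n → A → A → Prop :=
  fun i => relabel π (R i)

def Neutral {n : ℕ} (f : (Fin n → A → A → Prop) → Lottery A) : Prop :=
  ∀ R : Fin n → A → A → Prop, ValidProfile R →
    ∀ (π : Equiv.Perm A) (x : A), (f (relabelProfile π R)).1 (π x) = (f R).1 x

def Efficient {n : ℕ} (f : (Fin n → A → A → Prop) → Lottery A) : Prop :=
  ∀ R : Fin n → A → A → Prop, ValidProfile R → SDEfficientAt R (f R)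

def Strategyproof {n : ℕ} (f : (Fin n → A → A → Prop) → Lottery A) : Prop :=
  ¬ ∃ (R : Fin n → A → A → Prop) (i : Fin n) (r : A → A → Prop),
      ValidProfile R ∧ IsPref r ∧ SDGt (R i) (f (Function.update R i r)) (f R)


/-- Expected utility of a lottery. -/
noncomputable def expUtil {A : Type*} [Fintype A] (u : A → ℝ) (p : Lottery A) : ℝ :=
  ∑ x, p.1 x * u x

/-!
Let two agents hold the utilities `8a + 5b + 4c` and `4a + 5b + 8c` while everybody else is
indifferent. Swapping `a ↔ c` together with the two agents fixes this profile, so anonymity and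
neutrality force the outcome `p` to have `p a = p c`, and then efficiency against `½a + ½c`
pins the first agent's expected utility at `6`. If the first agent reports `5a + 4b + 8d` instead, the profile is fixed by
`(a b)(c d)` together with the agent swap, so `p a = p b` and `p c = p d`; efficiency against
`½a + ½b` now forces the outcome `½a + ½b`, which is worth `13/2 > 6` to the first agent.
-/

section CardinalDecisionScheme

variable {ι α : Type*} [Fintype α]

def IsAnonymousCDS (g : (ι → α → ℝ) → Lottery α) : Prop :=
  ∀ (U : ι → α → ℝ) (σ : Equiv.Perm ι), g (U ∘ σ) = g U

def IsNeutralCDS (g : (ι → α → ℝ) → Lottery α) : Prop :=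
  ∀ (U : ι → α → ℝ) (π : Equiv.Perm α) (x : α), (g (fun i => U i ∘ π)).1 x = (g U).1 (π x)

def IsUEfficientAt (U : ι → α → ℝ) (p : Lottery α) : Prop :=
  ¬ ∃ q : Lottery α, (∀ i, expUtil (U i) p ≤ expUtil (U i) q) ∧
    ∃ i, expUtil (U i) p < expUtil (U i) q

def IsUEfficient (g : (ι → α → ℝ) → Lottery α) : Prop :=
  ∀ U, IsUEfficientAt U (g U)

def IsUStrategyproof [DecidableEq ι] (g : (ι → α → ℝ) → Lottery α) : Prop :=
  ¬ ∃ (U : ι → α → ℝ) (i : ι) (u' : α → ℝ),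
    expUtil (U i) (g U) < expUtil (U i) (g (Function.update U i u'))

theorem IsAnonymousCDS.apply_perm_eq {g : (ι → α → ℝ) → Lottery α} (hanon : IsAnonymousCDS g)
    (hneut : IsNeutralCDS g) {U : ι → α → ℝ} {π : Equiv.Perm α} {σ : Equiv.Perm ι}
    (hU : (fun i => U i ∘ π) = U ∘ σ) (x : α) : (g U).1 (π x) = (g U).1 x := by
  rw [← hneut, hU, hanon]

theorem IsUEfficientAt.expUtil_eq_of_forall_le {U : ι → α → ℝ} {p q : Lottery α}
    (hp : IsUEfficientAt U p) (hle : ∀ i, expUtil (U i) p ≤ expUtil (U i) q) (i : ι) :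
    expUtil (U i) p = expUtil (U i) q :=
  (hle i).antisymm (not_lt.1 fun hlt => hp ⟨q, hle, i, hlt⟩)

end CardinalDecisionScheme

namespace Lottery

variable {α : Type*} [Fintype α]

theorem sum_le_one (p : Lottery α) (s : Finset α) : ∑ x ∈ s, p.1 x ≤ 1 :=
  (Finset.sum_le_univ_sum_of_nonneg p.2.1).trans_eq p.2.2

theorem add_add_le_one [DecidableEq α] (p : Lottery α) {a b c : α} (hab : a ≠ b) (hac : a ≠ c)
    (hbc : b ≠ c) : p.1 a + p.1 b + p.1 c ≤ 1 := by
  simpa [Finset.sum_insert, hab, hac, hbc, add_assoc] using p.sum_le_one {a, b, c}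

theorem add_add_add_le_one [DecidableEq α] (p : Lottery α) {a b c d : α} (hab : a ≠ b)
    (hac : a ≠ c) (had : a ≠ d) (hbc : b ≠ c) (hbd : b ≠ d) (hcd : c ≠ d) :
    p.1 a + p.1 b + p.1 c + p.1 d ≤ 1 := by
  simpa [Finset.sum_insert, hab, hac, had, hbc, hbd, hcd, add_assoc] using p.sum_le_one {a, b, c, d}

def half [DecidableEq α] (a b : α) : Lottery α :=
  ⟨Pi.single a (1 / 2) + Pi.single b (1 / 2), fun x => by
    simp only [Pi.add_apply, Pi.single_apply]; split_ifs <;> norm_num, by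
    simp [Finset.sum_add_distrib]; norm_num⟩

end Lottery

section ExpectedUtility

variable {α : Type*} [Fintype α]

theorem expUtil_zero (p : Lottery α) : expUtil 0 p = 0 := by
  simp [expUtil]

theorem expUtil_add (u v : α → ℝ) (p : Lottery α) :
    expUtil (u + v) p = expUtil u p + expUtil v p := by
  simp [expUtil, mul_add, Finset.sum_add_distrib]

theorem expUtil_single [DecidableEq α] (a : α) (v : ℝ) (p : Lottery α) :
    expUtil (Pi.single a v) p = p.1 a * v := by
  simp [expUtil, Pi.single_apply]

theorem expUtil_half [DecidableEq α] (u : α → ℝ) (a b : α) :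
    expUtil u (Lottery.half a b) = (u a + u b) / 2 := by
  simp [expUtil, Lottery.half, add_mul, Finset.sum_add_distrib, Pi.single_apply]
  ring

end ExpectedUtility

section Profiles

variable {ι α : Type*}

/-- The argument only uses `4 < 5 ≤ (8 + 4) / 2` and `8 < 5 + 4`. -/
def scoreUtil [DecidableEq α] (x y z : α) : α → ℝ :=
  Pi.single x 8 + Pi.single y 5 + Pi.single z 4

theorem scoreUtil_comp [DecidableEq α] (x y z : α) (π : Equiv.Perm α) :
    scoreUtil x y z ∘ π = scoreUtil (π.symm x) (π.symm y) (π.symm z) := by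
  simp only [scoreUtil, Pi.add_comp, Pi.single_comp_equiv]

theorem expUtil_scoreUtil [Fintype α] [DecidableEq α] (x y z : α) (p : Lottery α) :
    expUtil (scoreUtil x y z) p = 8 * p.1 x + 5 * p.1 y + 4 * p.1 z := by
  simp only [scoreUtil, expUtil_add, expUtil_single]
  ring

def pairProfile [DecidableEq ι] (i j : ι) (u v : α → ℝ) : ι → α → ℝ :=
  Function.update (Function.update 0 j v) i u

variable [DecidableEq ι] {i j : ι} {u v : α → ℝ}

theorem pairProfile_left : pairProfile i j u v i = u :=
  Function.update_self ..

theorem update_pairProfile (u' : α → ℝ) :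
    Function.update (pairProfile i j u v) i u' = pairProfile i j u' v :=
  Function.update_idem ..

theorem comp_pairProfile_eq_comp_swap (hij : i ≠ j) {π : Equiv.Perm α} (hu : u ∘ π = v)
    (hv : v ∘ π = u) :
    (fun k => pairProfile i j u v k ∘ π) = pairProfile i j u v ∘ Equiv.swap i j := by
  funext k
  by_cases hki : k = i
  · subst hki; simp [pairProfile, hij.symm, hu]
  by_cases hkj : k = j
  · subst hkj; simp [pairProfile, hki, hv]
  · simp [pairProfile, Equiv.swap_apply_of_ne_of_ne hki hkj, hki, hkj]

theorem expUtil_pairProfile_le [Fintype α] {p q : Lottery α} (hu : expUtil u p ≤ expUtil u q)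
    (hv : expUtil v p ≤ expUtil v q) (k : ι) :
    expUtil (pairProfile i j u v k) p ≤ expUtil (pairProfile i j u v k) q := by
  by_cases hki : k = i
  · subst hki; simpa [pairProfile]
  by_cases hkj : k = j
  · subst hkj; simpa [pairProfile, hki]
  · simp [pairProfile, hki, hkj, expUtil_zero]

end Profiles

section Impossibility

variable {ι α : Type*} [Fintype α] [DecidableEq α] [DecidableEq ι] {g : (ι → α → ℝ) → Lottery α}
  {i j : ι} {a b c d : α}

theorem expUtil_scoreUtil_pairProfile_eq_six (hanon : IsAnonymousCDS g) (hneut : IsNeutralCDS g)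
    (heff : IsUEfficient g) (hij : i ≠ j) (hab : a ≠ b) (hac : a ≠ c) (hbc : b ≠ c) :
    expUtil (scoreUtil a b c) (g (pairProfile i j (scoreUtil a b c) (scoreUtil c b a))) = 6 := by
  set P := pairProfile i j (scoreUtil a b c) (scoreUtil c b a)
  have hswap : scoreUtil a b c ∘ Equiv.swap a c = scoreUtil c b a ∧
      scoreUtil c b a ∘ Equiv.swap a c = scoreUtil a b c := by
    simp [scoreUtil_comp, Equiv.swap_apply_of_ne_of_ne, hab.symm, hbc]
  have hca : (g P).1 c = (g P).1 a := by
    simpa using hanon.apply_perm_eq hneut (comp_pairProfile_eq_comp_swap hij hswap.1 hswap.2) a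
  have hsum := (g P).add_add_le_one hab hac hbc
  have hdom : ∀ k, expUtil (P k) (g P) ≤ expUtil (P k) (Lottery.half a c) := by
    refine expUtil_pairProfile_le ?_ ?_ <;> rw [expUtil_scoreUtil, expUtil_half] <;>
      simp [scoreUtil, hab, hac, hac.symm, hbc.symm] <;> linarith [(g P).2.1 b]
  have hi := (heff P).expUtil_eq_of_forall_le hdom i
  rw [show P i = scoreUtil a b c from pairProfile_left, expUtil_half] at hi
  rw [hi]
  norm_num [scoreUtil, hab, hac, hac.symm, hbc.symm]

theorem apply_pairProfile_scoreUtil_eq_half (hanon : IsAnonymousCDS g) (hneut : IsNeutralCDS g)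
    (heff : IsUEfficient g) (hij : i ≠ j) (hab : a ≠ b) (hac : a ≠ c) (had : a ≠ d) (hbc : b ≠ c)
    (hbd : b ≠ d) (hcd : c ≠ d) :
    (g (pairProfile i j (scoreUtil d a b) (scoreUtil c b a))).1 a = 1 / 2 ∧
      (g (pairProfile i j (scoreUtil d a b) (scoreUtil c b a))).1 b = 1 / 2 := by
  set P := pairProfile i j (scoreUtil d a b) (scoreUtil c b a)
  set π := Equiv.swap a b * Equiv.swap c d
  have hπ : scoreUtil d a b ∘ π = scoreUtil c b a ∧ scoreUtil c b a ∘ π = scoreUtil d a b := by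
    rw [scoreUtil_comp, scoreUtil_comp]
    simp [π, Equiv.Perm.mul_def, Equiv.swap_apply_of_ne_of_ne, hac, had, hbc, hbd,
      hac.symm, had.symm, hbc.symm, hbd.symm]
  have hsymm := hanon.apply_perm_eq hneut (comp_pairProfile_eq_comp_swap hij hπ.1 hπ.2)
  have hba : (g P).1 b = (g P).1 a := by
    simpa [π, Equiv.swap_apply_of_ne_of_ne, hac, had] using hsymm a
  have hdc : (g P).1 d = (g P).1 c := by
    simpa [π, Equiv.swap_apply_of_ne_of_ne, had.symm, hbd.symm] using hsymm c
  have hsum := (g P).add_add_add_le_one hab hac had hbc hbd hcd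
  have hdom : ∀ k, expUtil (P k) (g P) ≤ expUtil (P k) (Lottery.half a b) := by
    refine expUtil_pairProfile_le ?_ ?_ <;> rw [expUtil_scoreUtil, expUtil_half] <;>
      norm_num [scoreUtil, hab, hac, had, hbc, hbd, hab.symm] <;> linarith [(g P).2.1 c]
  have hi := (heff P).expUtil_eq_of_forall_le hdom i
  rw [show P i = scoreUtil d a b from pairProfile_left, expUtil_scoreUtil, expUtil_half] at hi
  norm_num [scoreUtil, hab, had, hbd, hab.symm] at hi
  constructor <;> linarith [(g P).2.1 c]

theorem not_isUStrategyproof (hanon : IsAnonymousCDS g) (hneut : IsNeutralCDS g)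
    (heff : IsUEfficient g) (hij : i ≠ j) (hab : a ≠ b) (hac : a ≠ c) (had : a ≠ d) (hbc : b ≠ c)
    (hbd : b ≠ d) (hcd : c ≠ d) : ¬ IsUStrategyproof g := by
  have htruthful := expUtil_scoreUtil_pairProfile_eq_six hanon hneut heff hij hab hac hbc
  obtain ⟨ha, hb⟩ :=
    apply_pairProfile_scoreUtil_eq_half hanon hneut heff hij hab hac had hbc hbd hcd
  have hc := (g (pairProfile i j (scoreUtil d a b) (scoreUtil c b a))).2.1 c
  intro hsp
  refine hsp ⟨pairProfile i j (scoreUtil a b c) (scoreUtil c b a), i, scoreUtil d a b, ?_⟩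
  rw [update_pairProfile, pairProfile_left, htruthful, expUtil_scoreUtil, ha, hb]
  linarith

end Impossibility

theorem no_anonymous_neutral_uEfficient_uStrategyproof_CDS
    (m n : ℕ) (hm : 4 ≤ m) (hn : 4 ≤ n) :
    ¬ ∃ g : (Fin n → Fin m → ℝ) → Lottery (Fin m),
        -- anonymity
        (∀ (U : Fin n → Fin m → ℝ) (σ : Equiv.Perm (Fin n)), g (U ∘ σ) = g U) ∧
        -- neutrality
        (∀ (U : Fin n → Fin m → ℝ) (π : Equiv.Perm (Fin m)) (x : Fin m),
          (g (fun i => U i ∘ π)).1 x = (g U).1 (π x)) ∧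
        -- u-efficiency
        (∀ U : Fin n → Fin m → ℝ,
          ¬ ∃ q : Lottery (Fin m), (∀ i, expUtil (U i) (g U) ≤ expUtil (U i) q) ∧
            ∃ i, expUtil (U i) (g U) < expUtil (U i) q) ∧
        -- u-strategyproofness
        (¬ ∃ (U : Fin n → Fin m → ℝ) (i : Fin n) (u' : Fin m → ℝ),
          expUtil (U i) (g U) < expUtil (U i) (g (Function.update U i u'))) := by
  rintro ⟨g, hanon, hneut, heff, hsp⟩
  refine not_isUStrategyproof (i := ⟨0, by omega⟩) (j := ⟨1, by omega⟩) (a := ⟨0, by omega⟩)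
    (b := ⟨1, by omega⟩) (c := ⟨2, by omega⟩) (d := ⟨3, by omega⟩) hanon hneut heff ?_ ?_ ?_ ?_ ?_ ?_ ?_
    hsp <;> simp

end
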